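/- arXiv:1805.09308 — 7 statements merged into one kernel-verified Lean document; each statement's English description precedes it below -/
import Mathlib

section
/- Let G be a finite group such that o(xy) ≤ max{o(x), o(y)} for all x, y ∈ G. Then for all x, y ∈ G with o(x) ≠ o(y), we have o(xy) = max{o(x), o(y)}. -/
theorem stmt_0 {G : Type*} [Group G] [Finite G]
    (h : ∀ x y : G, orderOf (x * y) ≤ max (orderOf x) (orderOf y)) :
    ∀ x y : G, orderOf x ≠ orderOf y →
      orderOf (x * y) = max (orderOf x) (orderOf y) := by
  intro x y hne
  rcases lt_or_gt_of_ne hne with hlt | hlt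
  · -- orderOf x < orderOf y
    have h1 := h x⁻¹ (x * y)
    rw [inv_mul_cancel_left, orderOf_inv] at h1
    have h2 : orderOf y ≤ orderOf (x * y) := by
      rcases max_cases (orderOf x) (orderOf (x * y)) with ⟨he, _⟩ | ⟨he, _⟩ <;> omega
    have h3 := h x y
    omega
  · -- orderOf y < orderOf x
    have h1 := h (x * y) y⁻¹
    rw [mul_inv_cancel_right, orderOf_inv] at h1
    have h2 : orderOf x ≤ orderOf (x * y) := by
      rcases max_cases (orderOf (x * y)) (orderOf y) with ⟨he, _⟩ | ⟨he, _⟩ <;> omega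
    have h3 := h x y
    omega
end

section
/- If G is a finite group satisfying o(xy) ≤ max{o(x), o(y)} for all x, y ∈ G, then every element of G has prime power order. -/
lemma aux_decomp (n : ℕ) (hn0 : n ≠ 0) :
    (∃ p k, p.Prime ∧ n = p ^ k) ∨
    ∃ a b, 2 ≤ a ∧ 2 ≤ b ∧ Nat.Coprime a b ∧ a * b = n := by
  rcases eq_or_ne n 1 with rfl | h1
  · exact Or.inl ⟨2, 0, Nat.prime_two, rfl⟩
  have hp : n.minFac.Prime := Nat.minFac_prime h1
  rcases eq_or_ne (ordCompl[n.minFac] n) 1 with hb1 | hb1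
  · left
    refine ⟨n.minFac, n.factorization n.minFac, hp, ?_⟩
    conv_lhs => rw [← Nat.ordProj_mul_ordCompl_eq_self n n.minFac, hb1, mul_one]
  · right
    refine ⟨n.minFac ^ n.factorization n.minFac, ordCompl[n.minFac] n, ?_, ?_,
      (Nat.coprime_ordCompl hp hn0).pow_left _,
      Nat.ordProj_mul_ordCompl_eq_self n n.minFac⟩
    · have h1le : 1 ≤ n.factorization n.minFac := by
        rw [← Nat.Prime.pow_dvd_iff_le_factorization hp hn0, pow_one]
        exact Nat.minFac_dvd n
      calc 2 ≤ n.minFac := hp.two_le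
        _ = n.minFac ^ 1 := (pow_one _).symm
        _ ≤ n.minFac ^ n.factorization n.minFac :=
            Nat.pow_le_pow_right hp.pos h1le
    · have := Nat.ordCompl_pos n.minFac hn0
      omega

theorem stmt_2 {G : Type*} [Group G] [Finite G]
    (h : ∀ x y : G, orderOf (x * y) ≤ max (orderOf x) (orderOf y)) :
    ∀ x : G, ∃ (p k : ℕ), p.Prime ∧ orderOf x = p ^ k := by
  intro x
  have hn0 : orderOf x ≠ 0 := (orderOf_pos x).ne'
  rcases aux_decomp (orderOf x) hn0 with hgood | ⟨a, b, ha2, hb2, hcop, hab⟩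
  · exact hgood
  exfalso
  have hxa : orderOf (x ^ a) = b := by
    rw [orderOf_pow, ← hab, Nat.gcd_eq_right ⟨b, rfl⟩,
      Nat.mul_div_cancel_left _ (by omega)]
  have hxb : orderOf (x ^ b) = a := by
    rw [orderOf_pow, ← hab, Nat.gcd_eq_right ⟨a, mul_comm a b⟩,
      Nat.mul_div_cancel _ (by omega)]
  have hgcd : Nat.gcd (orderOf x) (a + b) = 1 := by
    have h1 : Nat.Coprime a (a + b) := by
      simpa [Nat.Coprime, Nat.coprime_add_self_left] using hcop
    have h2 : Nat.Coprime b (a + b) := by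
      simpa [Nat.Coprime, Nat.coprime_add_self_left, Nat.add_comm] using hcop.symm
    rw [← hab]; exact Nat.Coprime.mul h1 h2
  have hsum : orderOf (x ^ a * x ^ b) = orderOf x := by
    rw [← pow_add, orderOf_pow, hgcd, Nat.div_one]
  have hmax := h (x ^ a) (x ^ b)
  rw [hxa, hxb, hsum] at hmax
  have hlt1 : b < orderOf x := by
    calc b < a * b := by nlinarith
    _ = orderOf x := hab
  have hlt2 : a < orderOf x := by
    calc a < a * b := by nlinarith
    _ = orderOf x := hab
  omega
end

section
/- If G is a finite group satisfying o(xy) ≤ max{o(x), o(y)} for all x, y ∈ G, then there is a prime p dividing |G| such that the Fitting subgroup F(G) equals O_p(G) (in particular, F(G) is a p-group). -/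
/-- The Fitting subgroup: the largest normal nilpotent subgroup of `G`. -/
def fittingSubgroup (G : Type*) [Group G] : Subgroup G :=
  sSup {H : Subgroup G | H.Normal ∧ Group.IsNilpotent H}

/-- The `p`-core: the largest normal `p`-subgroup of `G`. -/
def pCore (p : ℕ) (G : Type*) [Group G] : Subgroup G :=
  sSup {H : Subgroup G | H.Normal ∧ IsPGroup p H}

/-!
If `x`, `y` commute and have distinct prime orders `p ≠ q`, then `o(xy) = pq > max p q`; so under
the hypothesis commuting elements of prime order have equal orders. The Sylow subgroups of a
finite nilpotent group are normal and pairwise disjoint, hence commute elementwise, so such a group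
is a `p`-group for a single prime `p`. The same argument applied to two nontrivial normal nilpotent
subgroups of `G` shows they are `p`-groups for the same `p`, so the normal nilpotent subgroups of
`G` are exactly its normal `p`-subgroups.
-/

open Subgroup

def CommutingPrimeOrdersEq (G : Type*) [Group G] : Prop :=
  ∀ x y : G, Commute x y → (orderOf x).Prime → (orderOf y).Prime → orderOf x = orderOf y

section

variable {G : Type*} [Group G]

theorem commutingPrimeOrdersEq_of_orderOf_mul_le
    (h : ∀ x y : G, orderOf (x * y) ≤ max (orderOf x) (orderOf y)) :
    CommutingPrimeOrdersEq G := by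
  intro x y hxy hx hy
  by_contra hne
  have hmul := hxy.orderOf_mul_eq_mul_orderOf_of_coprime ((Nat.coprime_primes hx hy).2 hne)
  have hlt : max (orderOf x) (orderOf y) < orderOf x * orderOf y :=
    max_lt (lt_mul_of_one_lt_right hx.pos hy.one_lt) (lt_mul_of_one_lt_left hy.pos hx.one_lt)
  exact (h x y).not_gt (hmul ▸ hlt)

namespace CommutingPrimeOrdersEq

theorem subgroup (hG : CommutingPrimeOrdersEq G) (H : Subgroup G) :
    CommutingPrimeOrdersEq H := by
  intro x y hxy hx hy
  rw [← orderOf_coe] at hx hy ⊢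
  rw [← orderOf_coe]
  exact hG x y (hxy.map H.subtype) hx hy

theorem eq_of_isPGroup_of_normal (hG : CommutingPrimeOrdersEq G) {p q : ℕ}
    [Fact p.Prime] [Fact q.Prime] {H K : Subgroup G} [Finite H] [Finite K]
    (hHn : H.Normal) (hKn : K.Normal) (hH : IsPGroup p H) (hK : IsPGroup q K)
    (hpH : p ∣ Nat.card H) (hqK : q ∣ Nat.card K) : p = q := by
  by_contra hpq
  obtain ⟨x, hx⟩ := exists_prime_orderOf_dvd_card' p hpH
  obtain ⟨y, hy⟩ := exists_prime_orderOf_dvd_card' q hqK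
  have hxy : Commute (x : G) y :=
    commute_of_normal_of_disjoint H K hHn hKn (IsPGroup.disjoint_of_ne p q hpq H K hH hK)
      x y x.2 y.2
  rw [← orderOf_coe] at hx hy
  have hxy' := hG x y hxy (hx ▸ Fact.out) (hy ▸ Fact.out)
  exact hpq (hx ▸ hy ▸ hxy')

theorem eq_of_dvd_card (hG : CommutingPrimeOrdersEq G) [Finite G] [Group.IsNilpotent G]
    {p q : ℕ} (hp : p.Prime) (hq : q.Prime) (hpG : p ∣ Nat.card G) (hqG : q ∣ Nat.card G) :
    p = q := by
  have : Fact p.Prime := ⟨hp⟩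
  have : Fact q.Prime := ⟨hq⟩
  obtain ⟨P⟩ := (inferInstance : Nonempty (Sylow p G))
  obtain ⟨Q⟩ := (inferInstance : Nonempty (Sylow q G))
  exact hG.eq_of_isPGroup_of_normal inferInstance inferInstance P.isPGroup' Q.isPGroup'
    (P.dvd_card_of_dvd_card hpG) (Q.dvd_card_of_dvd_card hqG)

theorem isPGroup (hG : CommutingPrimeOrdersEq G) [Finite G] [Group.IsNilpotent G] {p : ℕ}
    (hp : p.Prime) (hpG : p ∣ Nat.card G) : IsPGroup p G :=
  IsPGroup.of_card <| Nat.eq_prime_pow_of_unique_prime_dvd Nat.card_pos.ne'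
    fun hq hqG => hG.eq_of_dvd_card hq hp hqG hpG

theorem isPGroup_of_normal_of_isNilpotent (hG : CommutingPrimeOrdersEq G) [Finite G]
    {H K : Subgroup G} (hHn : H.Normal) (hKn : K.Normal) [Group.IsNilpotent H]
    [Group.IsNilpotent K] {p : ℕ} (hp : p.Prime) (hpH : p ∣ Nat.card H) : IsPGroup p K := by
  rcases eq_or_ne K ⊥ with rfl | hK
  · exact IsPGroup.of_bot
  obtain ⟨q, hq, hqK⟩ := Nat.exists_prime_and_dvd (mt card_eq_one.mp hK)
  have : Fact p.Prime := ⟨hp⟩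
  have : Fact q.Prime := ⟨hq⟩
  have hKq := (hG.subgroup K).isPGroup hq hqK
  obtain rfl := hG.eq_of_isPGroup_of_normal hHn hKn ((hG.subgroup H).isPGroup hp hpH) hKq
    hpH hqK
  exact hKq

theorem exists_prime_forall_isPGroup (hG : CommutingPrimeOrdersEq G) [Finite G]
    [Nontrivial G] : ∃ p : ℕ, p.Prime ∧ p ∣ Nat.card G ∧
      ∀ N : Subgroup G, N.Normal → Group.IsNilpotent N → IsPGroup p N := by
  by_cases hF : ∃ H : Subgroup G, H.Normal ∧ Group.IsNilpotent H ∧ H ≠ ⊥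
  · obtain ⟨H, hHn, hH, hHbot⟩ := hF
    obtain ⟨p, hp, hpH⟩ := Nat.exists_prime_and_dvd (mt card_eq_one.mp hHbot)
    exact ⟨p, hp, hpH.trans (card_subgroup_dvd_card H),
      fun N hNn _ => hG.isPGroup_of_normal_of_isNilpotent hHn hNn hp hpH⟩
  · push Not at hF
    obtain ⟨p, hp, hpG⟩ :=
      Nat.exists_prime_and_dvd (Finite.one_lt_card_iff_nontrivial.mpr ‹_›).ne'
    exact ⟨p, hp, hpG, fun N hNn hN => hF N hNn hN ▸ IsPGroup.of_bot⟩

end CommutingPrimeOrdersEq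

theorem isPGroup_pCore (p : ℕ) : IsPGroup p (pCore p G) := by
  rw [pCore, sSup_eq_iSup]
  exact Sylow.biSup_of_normal _ id (fun _ hH => hH.2) (fun _ hH => hH.1)

theorem fittingSubgroup_eq_pCore [Finite G] {p : ℕ} [Fact p.Prime]
    (h : ∀ N : Subgroup G, N.Normal → Group.IsNilpotent N → IsPGroup p N) :
    fittingSubgroup G = pCore p G :=
  congrArg sSup <| Set.ext fun N =>
    ⟨fun hN => ⟨hN.1, h N hN.1 hN.2⟩, fun hN => ⟨hN.1, hN.2.isNilpotent⟩⟩

end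

theorem stmt_12 {G : Type*} [Group G] [Finite G] [Nontrivial G]
    (h : ∀ x y : G, orderOf (x * y) ≤ max (orderOf x) (orderOf y)) :
    ∃ p : ℕ, p.Prime ∧ p ∣ Nat.card G ∧
      fittingSubgroup G = pCore p G ∧ IsPGroup p (fittingSubgroup G) := by
  obtain ⟨p, hp, hpG, hN⟩ :=
    (commutingPrimeOrdersEq_of_orderOf_mul_le h).exists_prime_forall_isPGroup
  have : Fact p.Prime := ⟨hp⟩
  have hF := fittingSubgroup_eq_pCore hN
  exact ⟨p, hp, hpG, hF, hF ▸ isPGroup_pCore p⟩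
end

section
/- If G is a finite group satisfying o(xy) ≤ max{o(x), o(y)} for all x, y ∈ G, then the center Z(G) and the Frattini subgroup Φ(G) are both p-groups for some prime p. -/
private lemma key13 {G : Type*} [Group G] [Finite G]
    (h : ∀ x y : G, orderOf (x * y) ≤ max (orderOf x) (orderOf y))
    {a b : G} (hc : Commute a b) {p q : ℕ} (hp : p.Prime) (hq : q.Prime)
    (ha : orderOf a = p) (hb : orderOf b = q) : p = q := by
  by_contra hpq
  have hco : Nat.Coprime (orderOf a) (orderOf b) := by
    rw [ha, hb]; exact (Nat.coprime_primes hp hq).mpr hpq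
  have hmul := Commute.orderOf_mul_eq_mul_orderOf_of_coprime hc hco
  have h2 := h a b
  rw [hmul, ha, hb] at h2
  rcases max_cases p q with ⟨he, _⟩ | ⟨he, _⟩ <;> rw [he] at h2 <;>
    nlinarith [hp.two_le, hq.two_le]

/-- In a finite nilpotent group, elements of distinct prime orders commute. -/
private lemma nilcomm13 {H : Type*} [Group H] [Finite H] (hn : Group.IsNilpotent H)
    {x y : H} {p q : ℕ} [hp : Fact p.Prime] [hq : Fact q.Prime] (hpq : p ≠ q)
    (hx : orderOf x = p) (hy : orderOf y = q) : Commute x y := by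
  have hs : ∀ (r : ℕ) (_ : Fact r.Prime) (P : Sylow r H), (↑P : Subgroup H).Normal :=
    ((isNilpotent_of_finite_tfae (G := H)).out 0 3).mp hn
  have hxP : IsPGroup p (Subgroup.zpowers x) :=
    IsPGroup.of_card (n := 1) (by rw [Nat.card_zpowers, hx, pow_one])
  have hyQ : IsPGroup q (Subgroup.zpowers y) :=
    IsPGroup.of_card (n := 1) (by rw [Nat.card_zpowers, hy, pow_one])
  obtain ⟨P, hP⟩ := hxP.exists_le_sylow
  obtain ⟨Q, hQ⟩ := hyQ.exists_le_sylow
  have hdis : Disjoint (P : Subgroup H) (Q : Subgroup H) :=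
    IsPGroup.disjoint_of_ne p q hpq (P : Subgroup H) (Q : Subgroup H) P.isPGroup' Q.isPGroup'
  exact Subgroup.commute_of_normal_of_disjoint P Q (hs p hp P) (hs q hq Q) hdis
    x y (hP (Subgroup.mem_zpowers x)) (hQ (Subgroup.mem_zpowers y))

private lemma aux13 {G : Type*} [Group G] [Finite G] {H : Subgroup G} {p : ℕ} (hp : p.Prime)
    (hall : ∀ q : ℕ, q.Prime → (∃ a : H, orderOf a = q) → q = p) : IsPGroup p H := by
  haveI : Fact p.Prime := ⟨hp⟩
  apply IsPGroup.of_card (n := (Nat.card H).primeFactorsList.length)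
  apply Nat.eq_prime_pow_of_unique_prime_dvd Nat.card_pos.ne'
  intro q hq hdvd
  haveI : Fact q.Prime := ⟨hq⟩
  exact hall q hq (exists_prime_orderOf_dvd_card' q hdvd)

theorem stmt_13 {G : Type*} [Group G] [Finite G]
    (h : ∀ x y : G, orderOf (x * y) ≤ max (orderOf x) (orderOf y)) :
    ∃ p : ℕ, p.Prime ∧ IsPGroup p (Subgroup.center G) ∧ IsPGroup p (frattini G) := by
  by_cases hZ : Nat.card (Subgroup.center G) = 1
  · by_cases hF : Nat.card (frattini G) = 1
    · exact ⟨2, Nat.prime_two,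
        IsPGroup.of_card (n := 0) (by rw [hZ, pow_zero]),
        IsPGroup.of_card (n := 0) (by rw [hF, pow_zero])⟩
    · -- center trivial, use min prime factor of frattini
      set p := (Nat.card (frattini G)).minFac with hpdef
      have hp : p.Prime := Nat.minFac_prime hF
      haveI : Fact p.Prime := ⟨hp⟩
      obtain ⟨b, hb⟩ := exists_prime_orderOf_dvd_card' (G := frattini G) p
        (Nat.minFac_dvd _)
      refine ⟨p, hp, ?_, ?_⟩
      · refine aux13 hp fun q hq ⟨a, ha⟩ => absurd ?_ hq.one_lt.ne'
        have : orderOf a ∣ Nat.card (Subgroup.center G) := orderOf_dvd_natCard a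
        rw [ha, hZ] at this
        exact (Nat.dvd_one.mp this)
      · refine aux13 hp fun q hq ⟨a, ha⟩ => ?_
        rcases eq_or_ne q p with hqp | hqp
        · exact hqp
        haveI : Fact q.Prime := ⟨hq⟩
        have hcomm : Commute (a : G) (b : G) :=
          (nilcomm13 frattini_nilpotent hqp ha hb).map (frattini G).subtype
        exact key13 h hcomm hq hp (by rw [Subgroup.orderOf_coe a, ha])
          (by rw [Subgroup.orderOf_coe b, hb])
  · set p := (Nat.card (Subgroup.center G)).minFac with hpdef
    have hp : p.Prime := Nat.minFac_prime hZ
    haveI : Fact p.Prime := ⟨hp⟩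
    obtain ⟨b, hb⟩ := exists_prime_orderOf_dvd_card' (G := Subgroup.center G) p
      (Nat.minFac_dvd _)
    have hbcomm : ∀ g : G, Commute g (b : G) := fun g =>
      Subgroup.mem_center_iff.mp b.2 g
    refine ⟨p, hp, ?_, ?_⟩
    · refine aux13 hp fun q hq ⟨a, ha⟩ => ?_
      exact key13 h (hbcomm (a : G)) hq hp
        (by rw [Subgroup.orderOf_coe a, ha]) (by rw [Subgroup.orderOf_coe b, hb])
    · refine aux13 hp fun q hq ⟨a, ha⟩ => ?_
      exact key13 h (hbcomm (a : G)) hq hp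
        (by rw [Subgroup.orderOf_coe a, ha]) (by rw [Subgroup.orderOf_coe b, hb])
end

section
/- If G is a finite group satisfying o(xy) ≤ max{o(x), o(y)} for all x, y ∈ G, and G is not a p-group for any prime p, then the center Z(G) is trivial. -/
theorem stmt_14 {G : Type*} [Group G] [Finite G]
    (h : ∀ x y : G, orderOf (x * y) ≤ max (orderOf x) (orderOf y))
    (hnp : ¬ ∃ p : ℕ, p.Prime ∧ IsPGroup p G) :
    Subgroup.center G = ⊥ := by
  by_contra hc
  obtain ⟨z, hz, hz1⟩ : ∃ z : G, z ∈ Subgroup.center G ∧ z ≠ 1 := by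
    by_contra hno
    push_neg at hno
    exact hc (le_antisymm (fun g hg => by simpa using hno g hg) bot_le)
  have hzo : orderOf z ≠ 0 := (orderOf_pos z).ne'
  obtain ⟨p, hp, hpd⟩ := Nat.exists_prime_and_dvd (fun h1 => hz1 (orderOf_eq_one_iff.mp h1))
  set w := z ^ (orderOf z / p) with hw
  have hwo : orderOf w = p := orderOf_pow_orderOf_div hzo hpd
  have hwc : w ∈ Subgroup.center G := Subgroup.pow_mem _ hz _
  apply hnp
  refine ⟨p, hp, ?_⟩
  haveI : Fact p.Prime := ⟨hp⟩
  rw [IsPGroup.iff_orderOf]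
  intro x
  have hxo : orderOf x ≠ 0 := (orderOf_pos x).ne'
  refine ⟨(orderOf x).primeFactorsList.length,
    Nat.eq_prime_pow_of_unique_prime_dvd hxo ?_⟩
  intro q hq hqd
  by_contra hqp
  set y := x ^ (orderOf x / q) with hy
  have hyo : orderOf y = q := orderOf_pow_orderOf_div hxo hqd
  have hcomm : Commute y w := (Subgroup.mem_center_iff.mp hwc y)
  have hcop : Nat.Coprime (orderOf y) (orderOf w) := by
    rw [hyo, hwo]
    exact (Nat.coprime_primes hq hp).mpr hqp
  have := hcomm.orderOf_mul_eq_mul_orderOf_of_coprime hcop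
  have hle := h y w
  rw [this, hyo, hwo] at hle
  have h2q : 2 ≤ q := hq.two_le
  have h2p : 2 ≤ p := hp.two_le
  rcases max_cases q p with ⟨he, _⟩ | ⟨he, _⟩ <;> rw [he] at hle <;> nlinarith
end

section
/- If G is a finite nilpotent group satisfying o(xy) ≤ max{o(x), o(y)} for all x, y ∈ G, then G is a p-group for some prime p. -/
theorem stmt_15 {G : Type*} [Group G] [Finite G] [Nontrivial G]
    [Group.IsNilpotent G]
    (h : ∀ x y : G, orderOf (x * y) ≤ max (orderOf x) (orderOf y)) :
    ∃ p : ℕ, p.Prime ∧ IsPGroup p G := by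
  -- pick a prime p dividing the order of G
  have hcard : Nat.card G ≠ 1 := (Finite.one_lt_card_iff_nontrivial.mpr ‹_›).ne'
  obtain ⟨p, hp, hpd⟩ := (Nat.card G).exists_prime_and_dvd hcard
  haveI : Fact p.Prime := ⟨hp⟩
  refine ⟨p, hp, ?_⟩
  -- it suffices that every prime dividing |G| equals p
  have key : ∀ q : ℕ, q.Prime → q ∣ Nat.card G → q = p := by
    intro q hq hqd
    by_contra hne
    haveI : Fact q.Prime := ⟨hq⟩
    obtain ⟨x, hx⟩ := exists_prime_orderOf_dvd_card' p hpd
    obtain ⟨y, hy⟩ := exists_prime_orderOf_dvd_card' q hqd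
    -- x lies in a Sylow p-subgroup, y in a Sylow q-subgroup
    have hxp : IsPGroup p (Subgroup.zpowers x) :=
      IsPGroup.of_card (n := 1) (by simp [Nat.card_zpowers, hx])
    have hyq : IsPGroup q (Subgroup.zpowers y) :=
      IsPGroup.of_card (n := 1) (by simp [Nat.card_zpowers, hy])
    obtain ⟨P, hxP⟩ := hxp.exists_le_sylow
    obtain ⟨Q, hyQ⟩ := hyq.exists_le_sylow
    have hnorm : ∀ (r : ℕ) (_ : Fact r.Prime) (R : Sylow r G), (R : Subgroup G).Normal :=
      (isNilpotent_of_finite_tfae.out 0 3).mp ‹_›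
    have hxy : Commute x y :=
      Subgroup.commute_of_normal_of_disjoint (P : Subgroup G) (Q : Subgroup G)
        (hnorm p ‹_› P) (hnorm q ‹_› Q)
        (IsPGroup.disjoint_of_ne p q (Ne.symm hne) (P : Subgroup G) (Q : Subgroup G)
          P.isPGroup' Q.isPGroup')
        x y (hxP (Subgroup.mem_zpowers x)) (hyQ (Subgroup.mem_zpowers y))
    have hcop : Nat.Coprime (orderOf x) (orderOf y) := by
      rw [hx, hy]; exact (Nat.coprime_primes hp hq).mpr (Ne.symm hne)
    have := h x y
    rw [hxy.orderOf_mul_eq_mul_orderOf_of_coprime hcop, hx, hy] at this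
    rcases max_cases p q with ⟨hm, _⟩ | ⟨hm, _⟩ <;> rw [hm] at this <;> nlinarith
      [hp.two_le, hq.two_le]
  intro g
  have : orderOf g ∣ Nat.card G := orderOf_dvd_natCard g
  have hpow := Nat.eq_prime_pow_of_unique_prime_dvd (n := orderOf g) (orderOf_pos g).ne'
    (fun {d} hd hdd => key d hd (hdd.trans this))
  exact ⟨_, by rw [← hpow]; exact pow_orderOf_eq_one g⟩
end

section
/- If G is a finite group satisfying o(xy) ≤ max{o(x), o(y)} for all x, y ∈ G, then G is solvable. -/
/-!
Let `m` be the largest element order of `G`. By the hypothesis, the elements of order `< m`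
form a subgroup `N`, normal because conjugation preserves orders. If `p` is a prime divisor
of `m`, then `x ^ p ∈ N` for every `x`, since `x ^ p` has order `m / p` when `x` has order
`m`; so `G ⧸ N` is a `p`-group, hence nilpotent. The subgroup `N` inherits the hypothesis
and is proper, so it is solvable by induction on `|G|`.
-/

def OrderOfMulLeMax (G : Type*) [Group G] : Prop :=
  ∀ x y : G, orderOf (x * y) ≤ max (orderOf x) (orderOf y)

namespace OrderOfMulLeMax

variable {G : Type*} [Group G]

theorem subgroup (h : OrderOfMulLeMax G) (H : Subgroup G) : OrderOfMulLeMax H := fun x y => by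
  simpa only [← Subgroup.orderOf_coe, Subgroup.coe_mul] using h x y

def subgroupOrderLt (h : OrderOfMulLeMax G) (m : ℕ) (hm : 1 < m) : Subgroup G where
  carrier := {x | orderOf x < m}
  one_mem' := show orderOf (1 : G) < m by rwa [orderOf_one]
  mul_mem' {x y} hx hy := (h x y).trans_lt (max_lt hx hy)
  inv_mem' {x} hx := show orderOf x⁻¹ < m by rwa [orderOf_inv]

section subgroupOrderLt

variable (h : OrderOfMulLeMax G) {m : ℕ} (hm : 1 < m)

theorem mem_subgroupOrderLt {x : G} : x ∈ h.subgroupOrderLt m hm ↔ orderOf x < m := Iff.rfl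

instance normal_subgroupOrderLt : (h.subgroupOrderLt m hm).Normal where
  conj_mem x hx g := by
    rwa [mem_subgroupOrderLt, ← MulAut.conj_apply, MulEquiv.orderOf_eq]

theorem isPGroup_quotient_subgroupOrderLt (hmax : ∀ x : G, orderOf x ≤ m) {p : ℕ}
    (hp : p.Prime) (hpm : p ∣ m) : IsPGroup p (G ⧸ h.subgroupOrderLt m hm) := by
  intro q
  obtain ⟨x, rfl⟩ := QuotientGroup.mk_surjective q
  refine ⟨1, ?_⟩
  rw [pow_one, ← QuotientGroup.mk_pow, QuotientGroup.eq_one_iff, mem_subgroupOrderLt]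
  rcases (hmax x).lt_or_eq with hlt | heq
  · calc orderOf (x ^ p) ≤ orderOf x := by
          rw [orderOf_pow' x hp.ne_zero]; exact Nat.div_le_self _ _
      _ < m := hlt
  · rw [orderOf_pow_of_dvd hp.ne_zero (heq ▸ hpm), heq]
    exact Nat.div_lt_self (by omega) hp.one_lt

end subgroupOrderLt

theorem isSolvable [Finite G] (h : OrderOfMulLeMax G) : Group.IsSolvable G := by
  induction hn : Nat.card G using Nat.strong_induction_on generalizing G with
  | _ n ih =>
  rcases subsingleton_or_nontrivial G with _ | _
  · infer_instance
  obtain ⟨g, hg⟩ := Finite.exists_max (orderOf : G → ℕ)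
  obtain ⟨x, hx⟩ := exists_ne (1 : G)
  have hm : 1 < orderOf g :=
    lt_of_le_of_ne (orderOf_pos x) (Ne.symm (orderOf_eq_one_iff.not.mpr hx)) |>.trans_le (hg x)
  set N := h.subgroupOrderLt (orderOf g) hm
  have hgN : g ∉ N := lt_irrefl (orderOf g)
  have hcard : Nat.card N < n := hn ▸ (Subgroup.card_le_card_group N).lt_of_ne
    fun hN => hgN (N.eq_top_of_card_eq hN ▸ Subgroup.mem_top g)
  have : Group.IsSolvable N := ih _ hcard (h.subgroup N) rfl
  have hp := Nat.minFac_prime hm.ne'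
  have : Fact (orderOf g).minFac.Prime := ⟨hp⟩
  have : Group.IsNilpotent (G ⧸ N) :=
    (h.isPGroup_quotient_subgroupOrderLt hm hg hp (Nat.minFac_dvd _)).isNilpotent
  exact (Group.isSolvable_iff_subgroup_quotient N).mpr ⟨‹_›, inferInstance⟩

end OrderOfMulLeMax

theorem stmt_17 {G : Type*} [Group G] [Finite G]
    (h : ∀ x y : G, orderOf (x * y) ≤ max (orderOf x) (orderOf y)) :
    IsSolvable G :=
  OrderOfMulLeMax.isSolvable h
end
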